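/- For transition matrices P and Q, both irreducible and reversible with respect to π on a finite state space, P efficiency-dominates Q (i.e., v(f,P) ≤ v(f,Q) for all f) if and only if ⟨f, Pf⟩ ≤ ⟨f, Qf⟩ for all f ∈ L²₀(π). -/

import Mathlib

open Matrix BigOperators Filter


def IsStochastic {n : ℕ} (P : Matrix (Fin n) (Fin n) ℝ) : Prop :=
  (∀ x y, 0 ≤ P x y) ∧ ∀ x, ∑ y, P x y = 1

def IsReversible {n : ℕ} (π : Fin n → ℝ) (P : Matrix (Fin n) (Fin n) ℝ) : Prop :=
  ∀ x y, π x * P x y = π y * P y x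

def MatIrreducible {n : ℕ} (P : Matrix (Fin n) (Fin n) ℝ) : Prop :=
  ∀ x y, ∃ k : ℕ, 0 < (P ^ k) x y

noncomputable def pInner {n : ℕ} (π f g : Fin n → ℝ) : ℝ := ∑ x, f x * g x * π x

noncomputable def autocov {n : ℕ} (π : Fin n → ℝ) (P : Matrix (Fin n) (Fin n) ℝ)
    (f : Fin n → ℝ) (k : ℕ) : ℝ :=
  ∑ x, ∑ y, π x * (f x - ∑ z, π z * f z) * (P ^ k) x y * (f y - ∑ z, π z * f z)

noncomputable def varN {n : ℕ} (π : Fin n → ℝ) (P : Matrix (Fin n) (Fin n) ℝ)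
    (f : Fin n → ℝ) (N : ℕ) : ℝ :=
  ((N : ℝ))⁻¹ * ∑ i ∈ Finset.range N, ∑ j ∈ Finset.range N,
    autocov π P f (max i j - min i j)

def HasAsymptVar {n : ℕ} (π : Fin n → ℝ) (P : Matrix (Fin n) (Fin n) ℝ)
    (f : Fin n → ℝ) (v : ℝ) : Prop :=
  Tendsto (varN π P f) atTop (nhds v)

def EffDom {n : ℕ} (π : Fin n → ℝ) (P Q : Matrix (Fin n) (Fin n) ℝ) : Prop :=
  ∀ (f : Fin n → ℝ) (vP vQ : ℝ),
    HasAsymptVar π P f vP → HasAsymptVar π Q f vQ → vP ≤ vQ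

/-!
Let `f̄ = f - π f` and let `h` solve the Poisson equation `h - P h = f̄`, which is solvable
because, by irreducibility, the kernel of `I - P` consists of the constants. The
autocovariances `⟨f̄, Pᵏ f̄⟩` are second differences of `aₖ = ⟨h, Pᵏ h⟩`, so their Toeplitz sum
telescopes: the averages converge to `a₀ - a₂ = 2⟨h, f̄⟩ - ⟨f̄, f̄⟩`, the error being `O(1/N)`
since `|aₖ| ≤ ⟨h, h⟩`. The Dirichlet form `E(w) = ⟨w, w⟩ - ⟨w, P w⟩` is nonnegative, and
`E(h - w) ≥ 0` reads `2⟨w, f̄⟩ - E(w) ≤ ⟨h, f̄⟩`, with equality at `w = h`. Hence `E_Q ≤ E_P` on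
`L²₀(π)` makes the asymptotic variance of `P` at most that of `Q`; conversely, testing efficiency
dominance with `f = w - Q w`, whose Poisson solution for `Q` is `w`, gives `E_Q(w) ≤ E_P(w)`.
-/

open Finset fwdDiff

variable {n : ℕ} {π : Fin n → ℝ} {P : Matrix (Fin n) (Fin n) ℝ}

lemma pInner_comm (f g : Fin n → ℝ) : pInner π f g = pInner π g f := by
  unfold pInner
  exact Fintype.sum_congr _ _ fun x => by ring

lemma pInner_sub_left (f g h : Fin n → ℝ) :
    pInner π (f - g) h = pInner π f h - pInner π g h := by
  simp only [pInner, Pi.sub_apply, sub_mul, sum_sub_distrib]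

lemma pInner_sub_right (f g h : Fin n → ℝ) :
    pInner π f (g - h) = pInner π f g - pInner π f h := by
  simp only [pInner, Pi.sub_apply, mul_sub, sub_mul, sum_sub_distrib]

def center (π f : Fin n → ℝ) : Fin n → ℝ := fun x => f x - ∑ z, π z * f z

lemma sum_mul_center (hπ : ∑ x, π x = 1) (f : Fin n → ℝ) :
    ∑ x, π x * center π f x = 0 := by
  simp only [center, mul_sub, sum_sub_distrib, ← sum_mul, hπ, one_mul, sub_self]

lemma center_eq_self {f : Fin n → ℝ} (hf : ∑ x, π x * f x = 0) : center π f = f := by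
  funext x
  simp only [center, hf, sub_zero]

lemma IsStochastic.pow (hP : IsStochastic P) (k : ℕ) : IsStochastic (P ^ k) :=
  mem_rowStochastic_iff_sum.1 (pow_mem (mem_rowStochastic_iff_sum.2 hP) k)

lemma IsReversible.pow (hrev : IsReversible π P) (k : ℕ) : IsReversible π (P ^ k) := by
  induction k with
  | zero =>
    intro x y
    by_cases h : x = y
    · rw [h]
    · simp [h, Ne.symm h]
  | succ k ih =>
    intro x y
    calc π x * (P ^ (k + 1)) x y = ∑ z, π x * (P ^ k) x z * P z y := by
          rw [pow_succ, Matrix.mul_apply, mul_sum]; simp only [mul_assoc]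
      _ = ∑ z, π y * (P y z * (P ^ k) z x) := Fintype.sum_congr _ _ fun z => by
          linear_combination P z y * ih x z + (P ^ k) z x * hrev z y
      _ = π y * (P ^ (k + 1)) y x := by rw [pow_succ', Matrix.mul_apply, mul_sum]

lemma IsReversible.pInner_mulVec (hrev : IsReversible π P) (f g : Fin n → ℝ) :
    pInner π f (P *ᵥ g) = pInner π (P *ᵥ f) g := by
  simp only [pInner, Matrix.mulVec, dotProduct, mul_sum, sum_mul]
  rw [sum_comm]
  refine Fintype.sum_congr _ _ fun x => Fintype.sum_congr _ _ fun y => ?_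
  linear_combination f y * g x * hrev y x

lemma IsReversible.sum_mul_mulVec (hrev : IsReversible π P) (hP : IsStochastic P)
    (h : Fin n → ℝ) : ∑ x, π x * (P *ᵥ h) x = ∑ x, π x * h x := by
  simp only [Matrix.mulVec, dotProduct, mul_sum]
  rw [sum_comm]
  refine Fintype.sum_congr _ _ fun y => ?_
  calc ∑ x, π x * (P x y * h y) = ∑ x, π y * h y * P y x := Fintype.sum_congr _ _ fun x => by
        linear_combination h y * hrev x y
    _ = π y * h y := by rw [← mul_sum, hP.2, mul_one]

lemma abs_pInner_mulVec_le (hπ : ∀ x, 0 ≤ π x) (hP : IsStochastic P) (hrev : IsReversible π P)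
    (u : Fin n → ℝ) : |pInner π u (P *ᵥ u)| ≤ pInner π u u := by
  have hexpand : pInner π u (P *ᵥ u) = ∑ x, ∑ y, π x * P x y * (u x * u y) := by
    simp only [pInner, Matrix.mulVec, dotProduct, mul_sum, sum_mul]
    exact Fintype.sum_congr _ _ fun x => Fintype.sum_congr _ _ fun y => by ring
  have hsq : ∑ x, ∑ y, π x * P x y * ((u x ^ 2 + u y ^ 2) / 2) = pInner π u u := by
    have hcol : ∑ x, ∑ y, π x * P x y * u y ^ 2 = ∑ x, π x * u x ^ 2 := by
      simpa only [Matrix.mulVec, dotProduct, mul_sum, mul_assoc]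
        using hrev.sum_mul_mulVec hP (fun x => u x ^ 2)
    have hrow : ∑ x, ∑ y, π x * P x y * u x ^ 2 = ∑ x, π x * u x ^ 2 :=
      Fintype.sum_congr _ _ fun x => by rw [← sum_mul, ← mul_sum, hP.2, mul_one]
    have hsplit : ∀ x y, π x * P x y * ((u x ^ 2 + u y ^ 2) / 2)
        = (π x * P x y * u x ^ 2 + π x * P x y * u y ^ 2) / 2 := fun x y => by ring
    simp only [hsplit, ← sum_div, sum_add_distrib, hrow, hcol, pInner]
    rw [← two_mul, mul_div_cancel_left₀ _ two_ne_zero]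
    exact Fintype.sum_congr _ _ fun x => by ring
  rw [hexpand, ← hsq]
  refine (abs_sum_le_sum_abs _ _).trans (sum_le_sum fun x _ => ?_)
  refine (abs_sum_le_sum_abs _ _).trans (sum_le_sum fun y _ => ?_)
  rw [abs_mul, abs_of_nonneg (mul_nonneg (hπ x) (hP.1 x y))]
  gcongr
  · exact mul_nonneg (hπ x) (hP.1 x y)
  · rw [abs_mul]; nlinarith [two_mul_le_add_sq |u x| |u y|, sq_abs (u x), sq_abs (u y)]

lemma IsStochastic.of_pow_apply_pos (hP : IsStochastic P) {S : Fin n → Prop}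
    (hstep : ∀ x y, 0 < P x y → S x → S y) (k : ℕ) {x y : Fin n} (hk : 0 < (P ^ k) x y)
    (hx : S x) : S y := by
  induction k generalizing y with
  | zero =>
    obtain rfl : x = y := by by_contra h; simp [h] at hk
    exact hx
  | succ k ih =>
    rw [pow_succ, Matrix.mul_apply] at hk
    obtain ⟨z, hz⟩ : ∃ z, 0 < (P ^ k) x z * P z y := by
      by_contra! h
      exact hk.not_ge (sum_nonpos fun z _ => h z)
    exact hstep z y (pos_of_mul_pos_right hz ((hP.pow k).1 x z))
      (ih (pos_of_mul_pos_left hz (hP.1 z y)))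

lemma IsStochastic.eq_of_mulVec_eq_self (hP : IsStochastic P) (hirr : MatIrreducible P)
    {h : Fin n → ℝ} (hh : P *ᵥ h = h) (x y : Fin n) : h x = h y := by
  obtain ⟨x₀, -, hmax⟩ := exists_max_image univ h ⟨x, mem_univ x⟩
  have hstep : ∀ w z, 0 < P w z → h w = h x₀ → h z = h x₀ := by
    intro w z hwz hw
    have hgap : ∑ u, P w u * (h x₀ - h u) = 0 := by
      simp only [mul_sub, sum_sub_distrib, ← sum_mul, hP.2, one_mul]
      rw [← hw, ← congrFun hh w]
      exact sub_self _
    have hz := (sum_eq_zero_iff_of_nonneg fun u _ =>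
      mul_nonneg (hP.1 w u) (sub_nonneg.2 (hmax u (mem_univ u)))).1 hgap z (mem_univ z)
    linarith [(mul_eq_zero.1 hz).resolve_left hwz.ne']
  obtain ⟨k, hk⟩ := hirr x₀ x
  obtain ⟨l, hl⟩ := hirr x₀ y
  rw [hP.of_pow_apply_pos hstep k hk rfl, hP.of_pow_apply_pos hstep l hl rfl]

lemma IsStochastic.exists_sub_mulVec_eq (hπ : ∑ x, π x = 1) (hP : IsStochastic P)
    (hirr : MatIrreducible P) (hrev : IsReversible π P) {g : Fin n → ℝ}
    (hg : ∑ x, π x * g x = 0) : ∃ h, ∑ x, π x * h x = 0 ∧ h - P *ᵥ h = g := by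
  -- `I - P + 𝟙 πᵀ` preserves the mean and has trivial kernel; the preimage of a centred `g`
  -- is centred and solves `h - P h = g`.
  set L := (1 - P + Matrix.of fun _ y => π y).mulVecLin
  have hL : ∀ h, L h = h - P *ᵥ h + fun _ => ∑ y, π y * h y := fun h => by
    simp only [L, Matrix.mulVecLin_apply, Matrix.add_mulVec, Matrix.sub_mulVec, Matrix.one_mulVec]
    rfl
  have hmean : ∀ h, ∑ x, π x * L h x = ∑ x, π x * h x := fun h => by
    simp only [hL, Pi.add_apply, Pi.sub_apply, mul_add, mul_sub, sum_add_distrib,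
      sum_sub_distrib, hrev.sum_mul_mulVec hP, ← sum_mul, hπ, one_mul, sub_self, zero_add]
  have hinj : Function.Injective L := by
    rw [← LinearMap.ker_eq_bot, LinearMap.ker_eq_bot']
    intro h hLh
    have h0 : ∑ x, π x * h x = 0 := by rw [← hmean h, hLh]; simp
    have hfix : P *ᵥ h = h := by
      have := hL h
      rw [hLh, h0] at this
      exact (sub_eq_zero.1 ((add_zero _).symm.trans this.symm)).symm
    funext x
    calc h x = ∑ y, π y * h x := by rw [← sum_mul, hπ, one_mul]
      _ = ∑ y, π y * h y := Fintype.sum_congr _ _ fun y => by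
          rw [hP.eq_of_mulVec_eq_self hirr hfix x y]
      _ = 0 := h0
  obtain ⟨h, rfl⟩ := LinearMap.injective_iff_surjective.1 hinj g
  have h0 : ∑ x, π x * h x = 0 := (hmean h).symm.trans hg
  exact ⟨h, h0, by rw [hL, h0]; exact (add_zero _).symm⟩

lemma le_pInner_of_sub_mulVec_eq (hπ : ∀ x, 0 ≤ π x) (hP : IsStochastic P)
    (hrev : IsReversible π P) {h g : Fin n → ℝ} (hg : h - P *ᵥ h = g) (w : Fin n → ℝ) :
    2 * pInner π w g - (pInner π w w - pInner π w (P *ᵥ w)) ≤ pInner π h g := by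
  have hdirichlet := le_of_abs_le (abs_pInner_mulVec_le hπ hP hrev (h - w))
  subst hg
  simp only [Matrix.mulVec_sub, pInner_sub_left, pInner_sub_right] at hdirichlet ⊢
  linarith [pInner_comm (π := π) w h, hrev.pInner_mulVec w h, pInner_comm (π := π) (P *ᵥ w) h]

lemma autocov_eq_pInner (f : Fin n → ℝ) (k : ℕ) :
    autocov π P f k = pInner π (center π f) (P ^ k *ᵥ center π f) := by
  simp only [autocov, pInner, center, Matrix.mulVec, dotProduct, mul_sum, sum_mul]
  exact Fintype.sum_congr _ _ fun x => Fintype.sum_congr _ _ fun y => by ring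

lemma IsReversible.pInner_sub_mulVec_pow (hrev : IsReversible π P) (h : Fin n → ℝ) (k : ℕ) :
    pInner π (h - P *ᵥ h) (P ^ k *ᵥ (h - P *ᵥ h))
      = Δ_[1] (Δ_[1] fun j => pInner π h (P ^ j *ᵥ h)) k := by
  have hleft : ∀ j, pInner π (P *ᵥ h) (P ^ j *ᵥ h) = pInner π h (P ^ (j + 1) *ᵥ h) := fun j => by
    rw [← hrev.pInner_mulVec, Matrix.mulVec_mulVec, pow_succ']
  have hright : ∀ j, P ^ j *ᵥ (P *ᵥ h) = P ^ (j + 1) *ᵥ h := fun j => by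
    rw [Matrix.mulVec_mulVec, pow_succ]
  simp only [fwdDiff, Matrix.mulVec_sub, pInner_sub_left, pInner_sub_right, hright, hleft]
  ring

lemma sum_range_succ_sum_range_succ_dist {M : Type*} [AddCommMonoid M] (F : ℕ → M) (N : ℕ) :
    ∑ i ∈ range (N + 1), ∑ j ∈ range (N + 1), F (max i j - min i j)
      = ∑ i ∈ range N, ∑ j ∈ range N, F (max i j - min i j)
        + (∑ k ∈ range N, F (k + 1) + ∑ k ∈ range N, F (k + 1)) + F 0 := by
  have hreflect : ∑ i ∈ range N, F (N - i) = ∑ k ∈ range N, F (k + 1) := by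
    rw [← sum_range_reflect]
    exact sum_congr rfl fun i hi => by rw [mem_range] at hi; congr 1; omega
  have hcol : ∀ i ∈ range N, ∑ j ∈ range (N + 1), F (max i j - min i j)
      = ∑ j ∈ range N, F (max i j - min i j) + F (N - i) := fun i hi => by
    rw [mem_range] at hi
    rw [sum_range_succ, max_eq_right hi.le, min_eq_left hi.le]
  have hrow : ∑ j ∈ range (N + 1), F (max N j - min N j) = ∑ j ∈ range N, F (N - j) + F 0 := by
    rw [sum_range_succ, max_self, min_self, Nat.sub_self]
    congr 1
    exact sum_congr rfl fun j hj => by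
      rw [mem_range] at hj
      rw [max_eq_left hj.le, min_eq_right hj.le]
  rw [sum_range_succ, sum_congr rfl hcol, sum_add_distrib, hrow, hreflect]
  abel

-- For `aₖ = xᵏ` this is `(1 - x)² ∑ i < N, ∑ j < N, x ^ |i - j| = N (1 - x²) - 2x (1 - xᴺ)`.
lemma sum_range_sum_range_fwdDiff_fwdDiff {R : Type*} [CommRing R] (a : ℕ → R) (N : ℕ) :
    ∑ i ∈ range N, ∑ j ∈ range N, Δ_[1] (Δ_[1] a) (max i j - min i j)
      = N * (a 0 - a 2) - 2 * (a 1 - a (N + 1)) := by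
  induction N with
  | zero => simp
  | succ N ih =>
    have htel : ∑ k ∈ range N, Δ_[1] (Δ_[1] a) (k + 1) = Δ_[1] a (N + 1) - Δ_[1] a 1 :=
      sum_range_sub (fun k => Δ_[1] a (k + 1)) N
    rw [sum_range_succ_sum_range_succ_dist, ih, htel]
    simp only [fwdDiff]
    push_cast
    ring

open Topology in
lemma tendsto_inv_mul_sum_range_fwdDiff_fwdDiff {a : ℕ → ℝ} {C : ℝ} (ha : ∀ k, |a k| ≤ C) :
    Tendsto (fun N : ℕ => (N : ℝ)⁻¹ *
      ∑ i ∈ range N, ∑ j ∈ range N, Δ_[1] (Δ_[1] a) (max i j - min i j))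
      atTop (𝓝 (a 0 - a 2)) := by
  simp only [sum_range_sum_range_fwdDiff_fwdDiff]
  have hbdd : IsBoundedUnder (· ≤ ·) atTop (norm ∘ fun N : ℕ => 2 * (a 1 - a (N + 1))) :=
    isBoundedUnder_of ⟨2 * (C + C), fun N => by
      simp only [Function.comp_apply, Real.norm_eq_abs, abs_mul, abs_two]
      gcongr
      exact (abs_sub _ _).trans (add_le_add (ha 1) (ha (N + 1)))⟩
  have hlim := (tendsto_const_nhds (x := a 0 - a 2)).sub
    (tendsto_inv_atTop_nhds_zero_nat.zero_mul_isBoundedUnder_le hbdd)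
  rw [sub_zero] at hlim
  refine hlim.congr' ((eventually_ge_atTop 1).mono fun N hN => ?_)
  have hN : (N : ℝ) ≠ 0 := by positivity
  field_simp

theorem hasAsymptVar_of_sub_mulVec_eq (hπ : ∀ x, 0 ≤ π x) (hP : IsStochastic P)
    (hrev : IsReversible π P) {f h : Fin n → ℝ} (hh : h - P *ᵥ h = center π f) :
    HasAsymptVar π P f (2 * pInner π h (center π f) - pInner π (center π f) (center π f)) := by
  set a : ℕ → ℝ := fun k => pInner π h (P ^ k *ᵥ h)
  have hvar : varN π P f = fun N : ℕ => (N : ℝ)⁻¹ *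
      ∑ i ∈ range N, ∑ j ∈ range N, Δ_[1] (Δ_[1] a) (max i j - min i j) := by
    funext N
    rw [varN]
    simp only [autocov_eq_pInner, ← hh, hrev.pInner_sub_mulVec_pow]
    rfl
  have hbdd (k : ℕ) : |a k| ≤ pInner π h h := abs_pInner_mulVec_le hπ (hP.pow k) (hrev.pow k) h
  have hlim : a 0 - a 2 = 2 * pInner π h (center π f) - pInner π (center π f) (center π f) := by
    simp only [a]
    rw [← hh, pow_zero, Matrix.one_mulVec, pow_two, ← Matrix.mulVec_mulVec,
      hrev.pInner_mulVec]
    simp only [pInner_sub_left, pInner_sub_right]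
    linarith [pInner_comm (π := π) (P *ᵥ h) h]
  rw [HasAsymptVar, hvar, ← hlim]
  exact tendsto_inv_mul_sum_range_fwdDiff_fwdDiff hbdd

theorem stmt5 {n : ℕ} (π : Fin n → ℝ) (P Q : Matrix (Fin n) (Fin n) ℝ)
    (hπpos : ∀ x, 0 < π x) (hπsum : ∑ x, π x = 1)
    (hP : IsStochastic P) (hQ : IsStochastic Q)
    (hirrP : MatIrreducible P) (hirrQ : MatIrreducible Q)
    (hrevP : IsReversible π P) (hrevQ : IsReversible π Q) :
    EffDom π P Q ↔
      ∀ f : Fin n → ℝ, (∑ x, π x * f x = 0) →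
        pInner π f (P.mulVec f) ≤ pInner π f (Q.mulVec f) := by
  have hπ : ∀ x, 0 ≤ π x := fun x => (hπpos x).le
  constructor
  · intro hdom w hw
    set g := w - Q *ᵥ w
    have hcenter : center π g = g := center_eq_self <| by
      simp only [g, Pi.sub_apply, mul_sub, sum_sub_distrib, hrevQ.sum_mul_mulVec hQ, sub_self]
    obtain ⟨u, -, hu⟩ :=
      hP.exists_sub_mulVec_eq hπsum hirrP hrevP (hcenter ▸ sum_mul_center hπsum g)
    have hvar := hdom g _ _ (hasAsymptVar_of_sub_mulVec_eq hπ hP hrevP (hu.trans hcenter.symm))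
      (hasAsymptVar_of_sub_mulVec_eq hπ hQ hrevQ hcenter.symm)
    have hvariational := le_pInner_of_sub_mulVec_eq hπ hP hrevP hu w
    rw [hcenter] at hvar
    linarith [pInner_sub_right (π := π) w w (Q *ᵥ w)]
  · intro hdir f vP vQ hvP hvQ
    obtain ⟨u, hu_mean, hu⟩ := hP.exists_sub_mulVec_eq hπsum hirrP hrevP (sum_mul_center hπsum f)
    obtain ⟨v, -, hv⟩ := hQ.exists_sub_mulVec_eq hπsum hirrQ hrevQ (sum_mul_center hπsum f)
    rw [tendsto_nhds_unique hvP (hasAsymptVar_of_sub_mulVec_eq hπ hP hrevP hu),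
      tendsto_nhds_unique hvQ (hasAsymptVar_of_sub_mulVec_eq hπ hQ hrevQ hv)]
    have hvariational := le_pInner_of_sub_mulVec_eq hπ hQ hrevQ hv u
    have hdir_u := hdir u hu_mean
    rw [← hu, pInner_sub_right] at hvariational ⊢
    linarith
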